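/- Let U, V, M be real matrices with U^T U = I, V^T V = I, and let H satisfy U^T H V = 0. If ‖U M V^T + H‖_* = ‖M‖_*, then H = 0. -/

import Mathlib

/-
Put `Z = U M Vᵀ + H`, so that `Uᵀ Z V = M`. Let `W` be the partial isometry of the polar
decomposition of `M`, so that `tr (Wᵀ M) = ‖M‖_*`; then `G = U W Vᵀ` is again a partial isometry
and `tr (Gᵀ Z) = tr (Wᵀ Uᵀ Z V) = ‖M‖_* = ‖Z‖_*`. For a partial isometry `G`, Cauchy–Schwarz
applied column by column in an eigenbasis of `Zᵀ Z` gives `tr (Gᵀ Z) ≤ ‖Z‖_*`, and equality forces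
`Z = G |Z|` with `|Z|` living on the initial space of `G`, i.e. `Z = (G Gᵀ) Z (Gᵀ G)`. As
`G Gᵀ = U (W Wᵀ) Uᵀ` and `Gᵀ G = V (Wᵀ W) Vᵀ`, this gives `Z = U Uᵀ Z V Vᵀ = U M Vᵀ`, so `H = 0`.
-/

open Matrix

/-- The nuclear norm of a real matrix: the sum of its singular values,
i.e. the sum of the square roots of the eigenvalues of `Mᵀ * M`. -/
noncomputable def nuclearNorm {m n : Type*} [Fintype m] [Fintype n] [DecidableEq n]
    (M : Matrix m n ℝ) : ℝ :=
  ∑ i, Real.sqrt ((show (Mᵀ * M).IsHermitian by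
    rw [← Matrix.conjTranspose_eq_transpose_of_trivial]
    exact Matrix.isHermitian_conjTranspose_mul_self M).eigenvalues i)

section DotProduct

variable {ι κ : Type*} [Fintype ι] [Fintype κ] {a b : ι → ℝ} {c : κ → ℝ} {s : ℝ}

theorem dotProduct_self_nonneg (v : ι → ℝ) : 0 ≤ v ⬝ᵥ v :=
  Finset.sum_nonneg fun i _ => mul_self_nonneg (v i)

theorem dotProduct_le_of_dotProduct_self_add_eq_one (hs : 0 ≤ s) (hb : b ⬝ᵥ b = s ^ 2)
    (hac : a ⬝ᵥ a + c ⬝ᵥ c = 1) : a ⬝ᵥ b ≤ s := by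
  have hcs : (a ⬝ᵥ b) ^ 2 ≤ (a ⬝ᵥ a) * (b ⬝ᵥ b) :=
    (Finset.sum_mul_sq_le_sq_mul_sq _ a b).trans_eq (by simp [dotProduct, sq])
  refine abs_le_of_sq_le_sq' ?_ hs |>.2
  nlinarith [dotProduct_self_nonneg b, dotProduct_self_nonneg c]

theorem eq_smul_of_dotProduct_eq (hb : b ⬝ᵥ b = s ^ 2) (hac : a ⬝ᵥ a + c ⬝ᵥ c = 1)
    (hab : a ⬝ᵥ b = s) : b = s • a ∧ s • c = 0 := by
  have hsum : (b - s • a) ⬝ᵥ (b - s • a) + (s • c) ⬝ᵥ (s • c) = 0 := by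
    simp only [sub_dotProduct, dotProduct_sub, smul_dotProduct, dotProduct_smul, smul_eq_mul,
      dotProduct_comm b a]
    linear_combination hb + s ^ 2 * hac - 2 * s * hab
  have h₁ : 0 ≤ (b - s • a) ⬝ᵥ (b - s • a) := dotProduct_self_nonneg _
  have h₂ : 0 ≤ (s • c) ⬝ᵥ (s • c) := dotProduct_self_nonneg _
  exact ⟨sub_eq_zero.mp (dotProduct_self_eq_zero.mp (by linarith)),
    dotProduct_self_eq_zero.mp (by linarith)⟩

end DotProduct

section NuclearNorm

variable {m n : Type*} [Fintype m] [Fintype n] [DecidableEq n]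

theorem transpose_mul_mul_cancel {k p : Type*} [Fintype k] [DecidableEq m] {U : Matrix k m ℝ}
    (hU : Uᵀ * U = 1) (X : Matrix m p ℝ) : Uᵀ * (U * X) = X := by
  rw [← Matrix.mul_assoc, hU, Matrix.one_mul]

theorem exists_singularValues (Z : Matrix m n ℝ) :
    ∃ (F : Matrix n n ℝ) (σ : n → ℝ), Fᵀ * F = 1 ∧ (∀ i, 0 ≤ σ i) ∧
      Zᵀ * Z = F * diagonal (fun i => σ i ^ 2) * Fᵀ ∧ nuclearNorm Z = ∑ i, σ i := by
  have hZ := isHermitian_conjTranspose_mul_self Z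
  have hμ := eigenvalues_conjTranspose_mul_self_nonneg Z
  refine ⟨hZ.eigenvectorUnitary, fun i => √(hZ.eigenvalues i), ?_, fun i => Real.sqrt_nonneg _,
    ?_, rfl⟩
  · simp [← conjTranspose_eq_transpose_of_trivial, ← star_eq_conjTranspose]
  · simp only [Real.sq_sqrt (hμ _)]
    simpa [← conjTranspose_eq_transpose_of_trivial, ← star_eq_conjTranspose] using
      hZ.spectral_theorem

theorem transpose_mul_self_add_transpose_mul_self_one_sub {G : Matrix m n ℝ}
    (hG : G * Gᵀ * G = G) : Gᵀ * G + (1 - Gᵀ * G)ᵀ * (1 - Gᵀ * G) = 1 := by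
  have hP : Gᵀ * G * (Gᵀ * G) = Gᵀ * G := by
    rw [← Matrix.mul_assoc, Matrix.mul_assoc Gᵀ G Gᵀ, Matrix.mul_assoc Gᵀ, hG]
  simp only [transpose_sub, transpose_one, transpose_mul, transpose_transpose, sub_mul, mul_sub,
    Matrix.one_mul, Matrix.mul_one, hP]
  abel

theorem eq_mul_diagonal_of_trace_transpose_mul_eq_sum {p : Type*} [Fintype p]
    {A B : Matrix m n ℝ} {C : Matrix p n ℝ} {σ : n → ℝ} (hσ : ∀ j, 0 ≤ σ j)
    (hB : Bᵀ * B = diagonal fun j => σ j ^ 2) (hAC : Aᵀ * A + Cᵀ * C = 1)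
    (h : trace (Aᵀ * B) = ∑ j, σ j) :
    B = A * diagonal σ ∧ C * diagonal σ = 0 := by
  have hBj (j : n) : Bᵀ j ⬝ᵥ Bᵀ j = σ j ^ 2 :=
    (congr_fun₂ hB j j).trans (diagonal_apply_eq _ j)
  have hACj (j : n) : Aᵀ j ⬝ᵥ Aᵀ j + Cᵀ j ⬝ᵥ Cᵀ j = 1 :=
    (congr_fun₂ hAC j j).trans (one_apply_eq j)
  have hABj (j : n) : Aᵀ j ⬝ᵥ Bᵀ j = σ j :=
    (Finset.sum_eq_sum_iff_of_le fun j _ =>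
      dotProduct_le_of_dotProduct_self_add_eq_one (hσ j) (hBj j) (hACj j)).mp h j
      (Finset.mem_univ j)
  choose hBA hCσ using fun j => eq_smul_of_dotProduct_eq (hBj j) (hACj j) (hABj j)
  constructor <;> ext i j
  · simpa [mul_comm] using congrFun (hBA j) i
  · simpa [mul_comm] using congrFun (hCσ j) i

theorem exists_eq_mul_of_trace_eq_nuclearNorm {G Z : Matrix m n ℝ} (hG : G * Gᵀ * G = G)
    (h : trace (Gᵀ * Z) = nuclearNorm Z) :
    ∃ P : Matrix n n ℝ, Pᵀ = P ∧ Z = G * P ∧ Gᵀ * G * P = P := by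
  obtain ⟨F, σ, hF, hσ, hZ, hnorm⟩ := exists_singularValues Z
  have hF' : F * Fᵀ = 1 := mul_eq_one_comm.mp hF
  have hB : (Z * F)ᵀ * (Z * F) = diagonal fun j => σ j ^ 2 := by
    simp only [transpose_mul, Matrix.mul_assoc, ← Matrix.mul_assoc Zᵀ, hZ]
    simp only [← Matrix.mul_assoc, hF, Matrix.one_mul, Matrix.mul_one]
  have hAC : (G * F)ᵀ * (G * F) + ((1 - Gᵀ * G) * F)ᵀ * ((1 - Gᵀ * G) * F) = 1 := by
    simp only [transpose_mul, Matrix.mul_assoc, ← Matrix.mul_add]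
    simp only [← Matrix.mul_assoc, ← Matrix.add_mul,
      transpose_mul_self_add_transpose_mul_self_one_sub hG, Matrix.mul_one, hF]
  have htr : trace ((G * F)ᵀ * (Z * F)) = ∑ j, σ j := by
    rw [← hnorm, ← h, transpose_mul, Matrix.mul_assoc, trace_mul_comm, Matrix.mul_assoc,
      Matrix.mul_assoc, hF', Matrix.mul_one]
  obtain ⟨hZF, hGF⟩ := eq_mul_diagonal_of_trace_transpose_mul_eq_sum hσ hB hAC htr
  refine ⟨F * diagonal σ * Fᵀ, by simp [transpose_mul, Matrix.mul_assoc], ?_, ?_⟩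
  · calc Z = Z * F * Fᵀ := by rw [Matrix.mul_assoc, hF', Matrix.mul_one]
      _ = G * (F * diagonal σ * Fᵀ) := by rw [hZF]; simp only [Matrix.mul_assoc]
  · have hP : (1 - Gᵀ * G) * (F * diagonal σ * Fᵀ) = 0 := by
      rw [← Matrix.mul_assoc, ← Matrix.mul_assoc, hGF, Matrix.zero_mul]
    rw [sub_mul, Matrix.one_mul, sub_eq_zero] at hP
    exact hP.symm

theorem eq_mul_transpose_mul_mul_of_trace_eq_nuclearNorm {G Z : Matrix m n ℝ}
    (hG : G * Gᵀ * G = G) (h : trace (Gᵀ * Z) = nuclearNorm Z) :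
    Z = G * Gᵀ * Z * (Gᵀ * G) := by
  obtain ⟨P, hPt, hZ, hP⟩ := exists_eq_mul_of_trace_eq_nuclearNorm hG h
  have hZG : Z * (Gᵀ * G) = Z := by
    calc Z * (Gᵀ * G) = G * (Gᵀ * G * P)ᵀ := by
          rw [transpose_mul, hPt, transpose_mul, transpose_transpose, hZ, Matrix.mul_assoc]
      _ = Z := by rw [hP, hPt, hZ]
  rw [Matrix.mul_assoc, hZG, hZ, ← Matrix.mul_assoc, hG]

theorem exists_partialIsometry_trace_eq_nuclearNorm (M : Matrix m n ℝ) :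
    ∃ W : Matrix m n ℝ, W * Wᵀ * W = W ∧ trace (Wᵀ * M) = nuclearNorm M := by
  obtain ⟨E, σ, hE, -, hM, hnorm⟩ := exists_singularValues M
  have hinv : ∀ x : ℝ, x⁻¹ * (x⁻¹ * (x ^ 2 * x⁻¹)) = x⁻¹ := fun x => by
    rcases eq_or_ne x 0 with rfl | hx
    · simp
    · field_simp
  -- With `0⁻¹ = 0`, this is the partial isometry of the polar decomposition of `M`.
  refine ⟨M * (E * diagonal (fun i => (σ i)⁻¹) * Eᵀ), ?_, ?_⟩
  · simp only [transpose_mul, transpose_transpose, diagonal_transpose, Matrix.mul_assoc]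
    simp only [← Matrix.mul_assoc Mᵀ, hM]
    simp only [Matrix.mul_assoc, transpose_mul_mul_cancel hE, ← Matrix.mul_assoc (diagonal _),
      diagonal_mul_diagonal, hinv]
  · rw [transpose_mul, Matrix.mul_assoc, hM, hnorm]
    simp only [transpose_mul, transpose_transpose, diagonal_transpose, Matrix.mul_assoc,
      transpose_mul_mul_cancel hE, ← Matrix.mul_assoc (diagonal _), diagonal_mul_diagonal]
    rw [trace_mul_comm, Matrix.mul_assoc, hE, Matrix.mul_one, trace_diagonal]
    simp only [sq, ← mul_assoc, inv_mul_mul_self]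

theorem mul_mul_transpose_mul_transpose_mul_eq {k l : Type*} [Fintype k] [Fintype l]
    [DecidableEq m] {U : Matrix k m ℝ} {V : Matrix l n ℝ} {W : Matrix m n ℝ}
    (hU : Uᵀ * U = 1) (hV : Vᵀ * V = 1) (hW : W * Wᵀ * W = W) :
    U * W * Vᵀ * (U * W * Vᵀ)ᵀ * (U * W * Vᵀ) = U * W * Vᵀ := by
  simp only [transpose_mul, transpose_transpose, Matrix.mul_assoc, transpose_mul_mul_cancel hU,
    transpose_mul_mul_cancel hV]
  rw [← Matrix.mul_assoc W Wᵀ, ← Matrix.mul_assoc (W * Wᵀ), hW]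

end NuclearNorm

theorem stmt_5 {k l m n : Type*} [Fintype k] [Fintype l] [Fintype m] [Fintype n]
    [DecidableEq l] [DecidableEq m] [DecidableEq n]
    (U : Matrix k m ℝ) (V : Matrix l n ℝ) (M : Matrix m n ℝ) (H : Matrix k l ℝ)
    (hU : Uᵀ * U = 1) (hV : Vᵀ * V = 1) (hH : Uᵀ * H * V = 0)
    (hnorm : nuclearNorm (U * M * Vᵀ + H) = nuclearNorm M) :
    H = 0 := by
  set Z := U * M * Vᵀ + H
  have hZ : Uᵀ * Z * V = M := by
    simp only [Z, Matrix.mul_add, Matrix.add_mul, hH, add_zero, Matrix.mul_assoc, hV,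
      transpose_mul_mul_cancel hU, Matrix.mul_one]
  obtain ⟨W, hW, hWM⟩ := exists_partialIsometry_trace_eq_nuclearNorm M
  set G := U * W * Vᵀ
  have hG : G * Gᵀ * G = G := mul_mul_transpose_mul_transpose_mul_eq hU hV hW
  have htr : trace (Gᵀ * Z) = nuclearNorm Z := by
    rw [hnorm, ← hWM, ← hZ]
    simp only [G, transpose_mul, transpose_transpose, Matrix.mul_assoc]
    rw [trace_mul_comm]
    simp only [Matrix.mul_assoc]
  have hZUV : Z = U * M * Vᵀ := by
    rw [← hZ, eq_mul_transpose_mul_mul_of_trace_eq_nuclearNorm hG htr]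
    simp only [G, transpose_mul, transpose_transpose, Matrix.mul_assoc, transpose_mul_mul_cancel hU,
      transpose_mul_mul_cancel hV]
  simpa [Z] using hZUV
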